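/- Conservative update improvement (Corollary 1): Fix a risk parameter λ > 0, a joint agent-state based policy π, a time t ∈ {1,…,T}, an agent i ∈ {1,2}, and α ∈ [0,1]. Let π̄^i_t be any greedy update for agent i at time t, and define the conservative stage-t rule π^{i,α}_t(a^i,z^i|y^i,z^i₋) = (1−α)·π^i_t(a^i,z^i|y^i,z^i₋) + α·𝟙[(a^i,z^i) = π̄^i_t(y^i,z^i₋)]. Let π' denote the joint policy obtained from π by replacing π^i_t with π^{i,α}_t. Then J^λ_{t:T}(π') ≥ J^λ_{t:T}(π). -/

import Mathlib

open Finset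
open scoped Classical

/-- A two-agent finite-horizon Dec-POMDP. -/
structure DecPOMDP (S Y1 Y2 A1 A2 Z1 Z2 : Type)
    [Fintype S] [Fintype Y1] [Fintype Y2] [Fintype A1] [Fintype A2]
    [Fintype Z1] [Fintype Z2] where
  P : S → A1 × A2 → S × Y1 × Y2 → ℝ
  P_nonneg : ∀ s a x, 0 ≤ P s a x
  P_sum : ∀ s a, ∑ x, P s a x = 1
  r : S → A1 × A2 → ℝ
  init : S × Y1 × Y2 → ℝ
  init_nonneg : ∀ x, 0 ≤ init x
  init_sum : ∑ x, init x = 1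
  phi1 : Z1 → ℝ
  phi1_nonneg : ∀ z, 0 ≤ phi1 z
  phi1_sum : ∑ z, phi1 z = 1
  phi2 : Z2 → ℝ
  phi2_nonneg : ∀ z, 0 ≤ phi2 z
  phi2_sum : ∑ z, phi2 z = 1
  T : ℕ
  T_pos : 1 ≤ T

variable {S Y1 Y2 A1 A2 Z1 Z2 : Type}
  [Fintype S] [Fintype Y1] [Fintype Y2] [Fintype A1] [Fintype A2]
  [Fintype Z1] [Fintype Z2]
  [Nonempty S] [Nonempty Y1] [Nonempty Y2] [Nonempty A1] [Nonempty A2]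
  [Nonempty Z1] [Nonempty Z2]

/-- A stage decision rule is a pmf on actions and next agent states for each
observation/agent-state pair. -/
def IsRule {Y Z A : Type} [Fintype A] [Fintype Z] (ρ : Y → Z → A × Z → ℝ) : Prop :=
  (∀ y z x, 0 ≤ ρ y z x) ∧ ∀ y z, ∑ x, ρ y z x = 1

/-- An agent-state based policy: a stage rule for every (0-indexed) time. -/
def IsPolicy {Y Z A : Type} [Fintype A] [Fintype Z] (π : ℕ → Y → Z → A × Z → ℝ) : Prop :=
  ∀ t, IsRule (π t)

/-- The marginal distribution ζ^π_t on (s_t, y_t, z_{t-1}) (time is 0-indexed). -/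
noncomputable def zetaM (M : DecPOMDP S Y1 Y2 A1 A2 Z1 Z2)
    (π1 : ℕ → Y1 → Z1 → A1 × Z1 → ℝ) (π2 : ℕ → Y2 → Z2 → A2 × Z2 → ℝ) :
    ℕ → S → Y1 × Y2 → Z1 × Z2 → ℝ
  | 0 => fun s y zm => M.init (s, y.1, y.2) * M.phi1 zm.1 * M.phi2 zm.2
  | (t+1) => fun s y zm =>
      ∑ s' : S, ∑ y' : Y1 × Y2, ∑ a' : A1 × A2, ∑ zm' : Z1 × Z2,
        zetaM M π1 π2 t s' y' zm' *
        (π1 t y'.1 zm'.1 (a'.1, zm.1) * π2 t y'.2 zm'.2 (a'.2, zm.2)) *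
        M.P s' a' (s, y.1, y.2)

/-- Auxiliary risk-seeking centralized Q-function, indexed by the number `m` of
remaining steps, so that the Q-function at (0-indexed) time `t` is `Qaux (T-1-t)`. -/
noncomputable def Qaux (M : DecPOMDP S Y1 Y2 A1 A2 Z1 Z2)
    (π1 : ℕ → Y1 → Z1 → A1 × Z1 → ℝ) (π2 : ℕ → Y2 → Z2 → A2 × Z2 → ℝ) (lam : ℝ) :
    ℕ → S → Y1 × Y2 → Z1 × Z2 → A1 × A2 → Z1 × Z2 → ℝ
  | 0 => fun s _ _ a _ => M.r s a
  | (m+1) => fun s _ _ a z => M.r s a + (1/lam) * Real.log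
      (∑ sp : S, ∑ yp : Y1 × Y2, ∑ ap : A1 × A2, ∑ zp : Z1 × Z2,
        M.P s a (sp, yp.1, yp.2) *
        (π1 (M.T - 1 - m) yp.1 z.1 (ap.1, zp.1) * π2 (M.T - 1 - m) yp.2 z.2 (ap.2, zp.2)) *
        Real.exp (lam * Qaux M π1 π2 lam m sp yp z ap zp))

/-- The risk-seeking centralized Q-function at (0-indexed) time `t`. -/
noncomputable def Qfun (M : DecPOMDP S Y1 Y2 A1 A2 Z1 Z2)
    (π1 : ℕ → Y1 → Z1 → A1 × Z1 → ℝ) (π2 : ℕ → Y2 → Z2 → A2 × Z2 → ℝ) (lam : ℝ) (t : ℕ) :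
    S → Y1 × Y2 → Z1 × Z2 → A1 × A2 → Z1 × Z2 → ℝ :=
  Qaux M π1 π2 lam (M.T - 1 - t)

/-- Risk-seeking performance J^λ_{t:T}(π) (time is 0-indexed). -/
noncomputable def Jrisk (M : DecPOMDP S Y1 Y2 A1 A2 Z1 Z2)
    (π1 : ℕ → Y1 → Z1 → A1 × Z1 → ℝ) (π2 : ℕ → Y2 → Z2 → A2 × Z2 → ℝ)
    (lam : ℝ) (t : ℕ) : ℝ :=
  (1/lam) * Real.log
    (∑ s : S, ∑ y : Y1 × Y2, ∑ zm : Z1 × Z2, ∑ a : A1 × A2, ∑ z : Z1 × Z2,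
      zetaM M π1 π2 t s y zm *
      (π1 t y.1 zm.1 (a.1, z.1) * π2 t y.2 zm.2 (a.2, z.2)) *
      Real.exp (lam * Qfun M π1 π2 lam t s y zm a z))

/-- Marginal of ζ^π_t on agent 1's (observation, previous agent state). -/
noncomputable def marg1 (M : DecPOMDP S Y1 Y2 A1 A2 Z1 Z2)
    (π1 : ℕ → Y1 → Z1 → A1 × Z1 → ℝ) (π2 : ℕ → Y2 → Z2 → A2 × Z2 → ℝ)
    (t : ℕ) (y1 : Y1) (z1m : Z1) : ℝ :=
  ∑ s : S, ∑ y2 : Y2, ∑ z2m : Z2, zetaM M π1 π2 t s (y1, y2) (z1m, z2m)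

/-- Marginal of ζ^π_t on agent 2's (observation, previous agent state). -/
noncomputable def marg2 (M : DecPOMDP S Y1 Y2 A1 A2 Z1 Z2)
    (π1 : ℕ → Y1 → Z1 → A1 × Z1 → ℝ) (π2 : ℕ → Y2 → Z2 → A2 × Z2 → ℝ)
    (t : ℕ) (y2 : Y2) (z2m : Z2) : ℝ :=
  ∑ s : S, ∑ y1 : Y1, ∑ z1m : Z1, zetaM M π1 π2 t s (y1, y2) (z1m, z2m)

/-- Averaged local Q-function for agent 1 at time t. -/
noncomputable def Qbar1 (M : DecPOMDP S Y1 Y2 A1 A2 Z1 Z2)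
    (π1 : ℕ → Y1 → Z1 → A1 × Z1 → ℝ) (π2 : ℕ → Y2 → Z2 → A2 × Z2 → ℝ)
    (lam : ℝ) (t : ℕ) (y1 : Y1) (z1m : Z1) (a1 : A1) (z1 : Z1) : ℝ :=
  (1/lam) * Real.log
    (∑ s : S, ∑ y2 : Y2, ∑ z2m : Z2, ∑ a2 : A2, ∑ z2 : Z2,
      (zetaM M π1 π2 t s (y1, y2) (z1m, z2m) / marg1 M π1 π2 t y1 z1m) *
      π2 t y2 z2m (a2, z2) *
      Real.exp (lam * Qfun M π1 π2 lam t s (y1, y2) (z1m, z2m) (a1, a2) (z1, z2)))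

/-- Averaged local Q-function for agent 2 at time t. -/
noncomputable def Qbar2 (M : DecPOMDP S Y1 Y2 A1 A2 Z1 Z2)
    (π1 : ℕ → Y1 → Z1 → A1 × Z1 → ℝ) (π2 : ℕ → Y2 → Z2 → A2 × Z2 → ℝ)
    (lam : ℝ) (t : ℕ) (y2 : Y2) (z2m : Z2) (a2 : A2) (z2 : Z2) : ℝ :=
  (1/lam) * Real.log
    (∑ s : S, ∑ y1 : Y1, ∑ z1m : Z1, ∑ a1 : A1, ∑ z1 : Z1,
      (zetaM M π1 π2 t s (y1, y2) (z1m, z2m) / marg2 M π1 π2 t y2 z2m) *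
      π1 t y1 z1m (a1, z1) *
      Real.exp (lam * Qfun M π1 π2 lam t s (y1, y2) (z1m, z2m) (a1, a2) (z1, z2)))

/-- `g` is a greedy update for agent 1 at time `t`: at each (y¹,z¹₋) with positive
marginal probability it selects a maximizer of the averaged local Q-function. -/
def IsGreedy1 (M : DecPOMDP S Y1 Y2 A1 A2 Z1 Z2)
    (π1 : ℕ → Y1 → Z1 → A1 × Z1 → ℝ) (π2 : ℕ → Y2 → Z2 → A2 × Z2 → ℝ)
    (lam : ℝ) (t : ℕ) (g : Y1 → Z1 → A1 × Z1) : Prop :=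
  ∀ y1 z1m, 0 < marg1 M π1 π2 t y1 z1m →
    ∀ a1 z1, Qbar1 M π1 π2 lam t y1 z1m a1 z1 ≤
      Qbar1 M π1 π2 lam t y1 z1m (g y1 z1m).1 (g y1 z1m).2

/-- `g` is a greedy update for agent 2 at time `t`. -/
def IsGreedy2 (M : DecPOMDP S Y1 Y2 A1 A2 Z1 Z2)
    (π1 : ℕ → Y1 → Z1 → A1 × Z1 → ℝ) (π2 : ℕ → Y2 → Z2 → A2 × Z2 → ℝ)
    (lam : ℝ) (t : ℕ) (g : Y2 → Z2 → A2 × Z2) : Prop :=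
  ∀ y2 z2m, 0 < marg2 M π1 π2 t y2 z2m →
    ∀ a2 z2, Qbar2 M π1 π2 lam t y2 z2m a2 z2 ≤
      Qbar2 M π1 π2 lam t y2 z2m (g y2 z2m).1 (g y2 z2m).2

/-- The (deterministic) stage rule that puts all mass on `g y z`. -/
noncomputable def detRule {Y Z A : Type} (g : Y → Z → A × Z) : Y → Z → A × Z → ℝ :=
  fun y z x => if x = g y z then 1 else 0

/-- The conservative mixture (1−α)·ρ + α·𝟙[(a,z) = g(y,z₋)] of a stage rule with a
deterministic greedy choice. -/
noncomputable def consRule {Y Z A : Type} (α : ℝ) (ρ : Y → Z → A × Z → ℝ)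
    (g : Y → Z → A × Z) : Y → Z → A × Z → ℝ :=
  fun y z x => (1 - α) * ρ y z x + α * (if x = g y z then 1 else 0)


/-!
Neither ζ^π_t (built from the rules before `t`) nor Q^π_t (built from the rules after `t`)
reads the stage-`t` rules, so exp(λ J^λ_{t:T}) is linear in agent 1's stage-`t` rule ρ: it is
`∑_{y¹,z¹₋} ∑_{(a¹,z¹)} ρ(a¹,z¹|y¹,z¹₋) W(y¹,z¹₋,a¹,z¹)` with `W = ζ^π_t(y¹,z¹₋) exp(λ Q̄¹_t)`.
A greedy update maximizes `W(y¹,z¹₋,·)`, so the average of `W` under π¹_t is at most its value at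
the greedy choice, and mixing in the greedy choice with weight α can only increase the sum.
Agent 2 is agent 1 of the Dec-POMDP with the agents relabelled.
-/

/-- The side condition replaces positivity of the sums, since `Real.log 0 = 0`. -/
theorem Real.log_sum_le_log_sum {ι : Type*} [Fintype ι] {a c : ι → ℝ} (ha : ∀ i, 0 ≤ a i)
    (hac : ∀ i, a i ≤ c i) (hc : ∀ i, a i = 0 → c i = 0) :
    Real.log (∑ i, a i) ≤ Real.log (∑ i, c i) := by
  rcases (Finset.sum_nonneg fun i _ => ha i).eq_or_lt with hA | hA
  · have hC : ∑ i, c i = 0 := Finset.sum_eq_zero fun i _ =>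
      hc i ((Fintype.sum_eq_zero_iff_of_nonneg ha).1 hA.symm ▸ rfl)
    rw [← hA, hC]
  · exact Real.log_le_log hA (Finset.sum_le_sum fun i _ => hac i)

section StageRule

variable {Y Z A : Type} [Fintype A] [Fintype Z] {ρ : Y → Z → A × Z → ℝ}

theorem IsRule.exists_pos (hρ : IsRule ρ) (y : Y) (z : Z) : ∃ x, 0 < ρ y z x := by
  by_contra! h
  have := Finset.sum_nonpos fun x (_ : x ∈ Finset.univ) => h x
  rw [hρ.2 y z] at this
  norm_num at this

theorem IsRule.sum_mul_le (hρ : IsRule ρ) (y : Y) (z : Z) {f : A × Z → ℝ} {c : ℝ}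
    (hf : ∀ x, f x ≤ c) : ∑ x, ρ y z x * f x ≤ c :=
  calc ∑ x, ρ y z x * f x ≤ ∑ x, ρ y z x * c :=
        Finset.sum_le_sum fun x _ => mul_le_mul_of_nonneg_left (hf x) (hρ.1 y z x)
    _ = c := by rw [← Finset.sum_mul, hρ.2, one_mul]

theorem IsRule.sum_mul_pos (hρ : IsRule ρ) (y : Y) (z : Z) {f : A × Z → ℝ}
    (hf : ∀ x, 0 < f x) : 0 < ∑ x, ρ y z x * f x := by
  obtain ⟨x, hx⟩ := hρ.exists_pos y z
  exact Finset.sum_pos' (fun x _ => mul_nonneg (hρ.1 y z x) (hf x).le)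
    ⟨x, Finset.mem_univ _, mul_pos hx (hf x)⟩

theorem sum_consRule_mul (α : ℝ) (ρ : Y → Z → A × Z → ℝ) (g : Y → Z → A × Z) (y : Y) (z : Z)
    (f : A × Z → ℝ) :
    ∑ x, consRule α ρ g y z x * f x = (1 - α) * ∑ x, ρ y z x * f x + α * f (g y z) := by
  simp [consRule, add_mul, Finset.sum_add_distrib, Finset.mul_sum, mul_assoc]

theorem log_sum_le_log_sum_consRule [Fintype Y] (hρ : IsRule ρ) {W : Y → Z → A × Z → ℝ}
    (hW : ∀ y z, (∀ x, W y z x = 0) ∨ ∀ x, 0 < W y z x) {g : Y → Z → A × Z}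
    (hg : ∀ y z x, W y z x ≤ W y z (g y z)) {α : ℝ} (hα : α ∈ Set.Icc (0 : ℝ) 1) :
    Real.log (∑ y, ∑ z, ∑ x, ρ y z x * W y z x) ≤
      Real.log (∑ y, ∑ z, ∑ x, consRule α ρ g y z x * W y z x) := by
  have key := Real.log_sum_le_log_sum (a := fun w : Y × Z => ∑ x, ρ w.1 w.2 x * W w.1 w.2 x)
    (c := fun w => ∑ x, consRule α ρ g w.1 w.2 x * W w.1 w.2 x) (fun w => ?nonneg)
    (fun w => ?le) (fun w => ?zero)
  · convert key using 2 <;> exact (Fintype.sum_prod_type' _).symm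
  case nonneg =>
    rcases hW w.1 w.2 with h0 | hpos
    · simp [h0]
    · exact (hρ.sum_mul_pos _ _ hpos).le
  case le =>
    rw [sum_consRule_mul]
    nlinarith [hρ.sum_mul_le w.1 w.2 (hg w.1 w.2), hα.1, hα.2]
  case zero =>
    rw [sum_consRule_mul]
    rcases hW w.1 w.2 with h0 | hpos
    · simp [h0]
    · exact fun hw => absurd hw (hρ.sum_mul_pos _ _ hpos).ne'

end StageRule

section FirstAgent

omit [Nonempty S] [Nonempty Y1] [Nonempty Y2] [Nonempty A1] [Nonempty A2] [Nonempty Z1]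
  [Nonempty Z2]

variable (M : DecPOMDP S Y1 Y2 A1 A2 Z1 Z2) {π1 : ℕ → Y1 → Z1 → A1 × Z1 → ℝ}
  {π2 : ℕ → Y2 → Z2 → A2 × Z2 → ℝ} (lam : ℝ) (t : ℕ)

theorem zetaM_nonneg (h1 : IsPolicy π1) (h2 : IsPolicy π2) (u : ℕ) (s : S) (y : Y1 × Y2)
    (zm : Z1 × Z2) : 0 ≤ zetaM M π1 π2 u s y zm := by
  induction u generalizing s y zm with
  | zero => exact mul_nonneg (mul_nonneg (M.init_nonneg _) (M.phi1_nonneg _)) (M.phi2_nonneg _)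
  | succ n ih =>
    refine Finset.sum_nonneg fun s' _ => Finset.sum_nonneg fun y' _ =>
      Finset.sum_nonneg fun a' _ => Finset.sum_nonneg fun zm' _ => ?_
    exact mul_nonneg (mul_nonneg (ih s' y' zm')
      (mul_nonneg ((h1 n).1 _ _ _) ((h2 n).1 _ _ _))) (M.P_nonneg _ _ _)

theorem zetaM_congr {π1' : ℕ → Y1 → Z1 → A1 × Z1 → ℝ} {π2' : ℕ → Y2 → Z2 → A2 × Z2 → ℝ}
    {u : ℕ} (h1 : ∀ n < u, π1 n = π1' n) (h2 : ∀ n < u, π2 n = π2' n) :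
    zetaM M π1 π2 u = zetaM M π1' π2' u := by
  induction u with
  | zero => rfl
  | succ n ih =>
    funext s y zm
    simp only [zetaM, ih (fun k hk => h1 k (by omega)) (fun k hk => h2 k (by omega)),
      h1 n n.lt_succ_self, h2 n n.lt_succ_self]

theorem Qaux_congr {π1' : ℕ → Y1 → Z1 → A1 × Z1 → ℝ} {π2' : ℕ → Y2 → Z2 → A2 × Z2 → ℝ}
    {m : ℕ} (h1 : ∀ k < m, π1 (M.T - 1 - k) = π1' (M.T - 1 - k))
    (h2 : ∀ k < m, π2 (M.T - 1 - k) = π2' (M.T - 1 - k)) :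
    Qaux M π1 π2 lam m = Qaux M π1' π2' lam m := by
  induction m with
  | zero => rfl
  | succ n ih =>
    funext s y zm a z
    simp only [Qaux, ih (fun k hk => h1 k (by omega)) (fun k hk => h2 k (by omega)),
      h1 n n.lt_succ_self, h2 n n.lt_succ_self]

variable {t} in
theorem Qfun_congr {π1' : ℕ → Y1 → Z1 → A1 × Z1 → ℝ} {π2' : ℕ → Y2 → Z2 → A2 × Z2 → ℝ}
    (h1 : ∀ n, t < n → π1 n = π1' n) (h2 : ∀ n, t < n → π2 n = π2' n) :
    Qfun M π1 π2 lam t = Qfun M π1' π2' lam t :=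
  Qaux_congr M lam (fun k hk => h1 _ (by omega)) (fun k hk => h2 _ (by omega))

theorem marg1_nonneg (h1 : IsPolicy π1) (h2 : IsPolicy π2) (y1 : Y1) (z1m : Z1) :
    0 ≤ marg1 M π1 π2 t y1 z1m :=
  Finset.sum_nonneg fun _ _ => Finset.sum_nonneg fun _ _ => Finset.sum_nonneg fun _ _ =>
    zetaM_nonneg M h1 h2 _ _ _ _

variable (π1 π2) in
/-- `ζ^π_t(y¹,z¹₋) · exp(λ Q̄¹_t(y¹,z¹₋,x))`, without dividing by a possibly vanishing
marginal. -/
noncomputable def localWeight1 (y1 : Y1) (z1m : Z1) (x : A1 × Z1) : ℝ :=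
  ∑ s : S, ∑ y2 : Y2, ∑ z2m : Z2, ∑ a2 : A2, ∑ z2 : Z2,
    zetaM M π1 π2 t s (y1, y2) (z1m, z2m) * π2 t y2 z2m (a2, z2) *
      Real.exp (lam * Qfun M π1 π2 lam t s (y1, y2) (z1m, z2m) (x.1, a2) (x.2, z2))

variable (π1 π2) in
theorem Qbar1_eq_log_div (y1 : Y1) (z1m : Z1) (a1 : A1) (z1 : Z1) :
    Qbar1 M π1 π2 lam t y1 z1m a1 z1 =
      1 / lam * Real.log (localWeight1 M π1 π2 lam t y1 z1m (a1, z1) / marg1 M π1 π2 t y1 z1m) := by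
  simp only [Qbar1, localWeight1, Finset.sum_div, div_mul_eq_mul_div]

theorem localWeight1_eq_zero_of_marg1_eq_zero (h1 : IsPolicy π1) (h2 : IsPolicy π2) {y1 : Y1}
    {z1m : Z1} (hm : marg1 M π1 π2 t y1 z1m = 0) (x : A1 × Z1) :
    localWeight1 M π1 π2 lam t y1 z1m x = 0 := by
  simp only [marg1, ← Fintype.sum_prod_type'] at hm
  have hζ := (Fintype.sum_eq_zero_iff_of_nonneg fun v => zetaM_nonneg M h1 h2 _ _ _ _).1 hm
  simp only [localWeight1, ← Fintype.sum_prod_type']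
  exact Finset.sum_eq_zero fun v _ => by
    rw [congrFun hζ (v.1, v.2.1, v.2.2.1), Pi.zero_apply, zero_mul, zero_mul]

theorem localWeight1_pos_of_marg1_pos (h1 : IsPolicy π1) (h2 : IsPolicy π2) {y1 : Y1}
    {z1m : Z1} (hm : 0 < marg1 M π1 π2 t y1 z1m) (x : A1 × Z1) :
    0 < localWeight1 M π1 π2 lam t y1 z1m x := by
  simp only [marg1, ← Fintype.sum_prod_type'] at hm
  obtain ⟨⟨s, y2, z2m⟩, -, hζ⟩ :=
    (Finset.sum_pos_iff_of_nonneg fun v _ => zetaM_nonneg M h1 h2 _ _ _ _).1 hm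
  obtain ⟨⟨a2, z2⟩, hπ⟩ := (h2 t).exists_pos y2 z2m
  simp only [localWeight1, ← Fintype.sum_prod_type']
  exact Finset.sum_pos' (fun v _ => mul_nonneg (mul_nonneg (zetaM_nonneg M h1 h2 _ _ _ _)
    ((h2 t).1 _ _ _)) (Real.exp_pos _).le)
    ⟨(s, y2, z2m, a2, z2), Finset.mem_univ _, mul_pos (mul_pos hζ hπ) (Real.exp_pos _)⟩

theorem localWeight1_le_of_isGreedy1 (h1 : IsPolicy π1) (h2 : IsPolicy π2) (hlam : 0 < lam)
    {g : Y1 → Z1 → A1 × Z1} (hg : IsGreedy1 M π1 π2 lam t g) (y1 : Y1) (z1m : Z1)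
    (x : A1 × Z1) :
    localWeight1 M π1 π2 lam t y1 z1m x ≤ localWeight1 M π1 π2 lam t y1 z1m (g y1 z1m) := by
  rcases (marg1_nonneg M t h1 h2 y1 z1m).eq_or_lt with hm | hm
  · rw [localWeight1_eq_zero_of_marg1_eq_zero M lam t h1 h2 hm.symm,
      localWeight1_eq_zero_of_marg1_eq_zero M lam t h1 h2 hm.symm]
  · have hQ := hg y1 z1m hm x.1 x.2
    rw [Qbar1_eq_log_div, Qbar1_eq_log_div, mul_le_mul_iff_right₀ (by positivity),
      Real.log_le_log_iff (div_pos (localWeight1_pos_of_marg1_pos M lam t h1 h2 hm _) hm)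
        (div_pos (localWeight1_pos_of_marg1_pos M lam t h1 h2 hm _) hm),
      div_le_div_iff_of_pos_right hm] at hQ
    exact hQ

variable (π1 π2) in
theorem Jrisk_update_left (ρ : Y1 → Z1 → A1 × Z1 → ℝ) :
    Jrisk M (Function.update π1 t ρ) π2 lam t =
      1 / lam * Real.log (∑ y1, ∑ z1m, ∑ x, ρ y1 z1m x * localWeight1 M π1 π2 lam t y1 z1m x) := by
  rw [Jrisk, zetaM_congr M (fun n hn => Function.update_of_ne hn.ne ρ π1) (fun _ _ => rfl),
    Qfun_congr M lam (fun n hn => Function.update_of_ne hn.ne' ρ π1) (fun _ _ => rfl),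
    Function.update_self]
  congr 2
  simp only [localWeight1, Finset.mul_sum, ← Fintype.sum_prod_type']
  refine Fintype.sum_equiv
    { toFun := fun ⟨s, (y1, y2), (z1m, z2m), (a1, a2), (z1, z2)⟩ =>
        (y1, z1m, (a1, z1), s, y2, z2m, a2, z2)
      invFun := fun ⟨y1, z1m, (a1, z1), s, y2, z2m, a2, z2⟩ =>
        (s, (y1, y2), (z1m, z2m), (a1, a2), (z1, z2))
      left_inv := fun _ => rfl
      right_inv := fun _ => rfl } _ _ fun _ => ?_
  dsimp only [Equiv.coe_fn_mk]
  ring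

theorem Jrisk_le_Jrisk_update_consRule_left (h1 : IsPolicy π1) (h2 : IsPolicy π2)
    (hlam : 0 < lam) {g : Y1 → Z1 → A1 × Z1} (hg : IsGreedy1 M π1 π2 lam t g) {α : ℝ}
    (hα : α ∈ Set.Icc (0 : ℝ) 1) :
    Jrisk M π1 π2 lam t ≤ Jrisk M (Function.update π1 t (consRule α (π1 t) g)) π2 lam t := by
  have hJ := Jrisk_update_left M π1 π2 lam t (π1 t)
  rw [Function.update_eq_self] at hJ
  rw [hJ, Jrisk_update_left]
  refine mul_le_mul_of_nonneg_left (log_sum_le_log_sum_consRule (h1 t) (fun y1 z1m => ?_)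
    (localWeight1_le_of_isGreedy1 M lam t h1 h2 hlam hg) hα) (by positivity)
  rcases (marg1_nonneg M t h1 h2 y1 z1m).eq_or_lt with hm | hm
  exacts [Or.inl (localWeight1_eq_zero_of_marg1_eq_zero M lam t h1 h2 hm.symm),
    Or.inr (localWeight1_pos_of_marg1_pos M lam t h1 h2 hm)]

end FirstAgent

namespace DecPOMDP

def swap (M : DecPOMDP S Y1 Y2 A1 A2 Z1 Z2) : DecPOMDP S Y2 Y1 A2 A1 Z2 Z1 where
  P s a x := M.P s a.swap (x.1, x.2.2, x.2.1)
  P_nonneg _ _ _ := M.P_nonneg _ _ _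
  P_sum s a := by
    rw [← M.P_sum s a.swap]
    exact Fintype.sum_equiv ((Equiv.refl S).prodCongr (Equiv.prodComm Y2 Y1)) _ _ fun _ => rfl
  r s a := M.r s a.swap
  init x := M.init (x.1, x.2.2, x.2.1)
  init_nonneg _ := M.init_nonneg _
  init_sum := by
    rw [← M.init_sum]
    exact Fintype.sum_equiv ((Equiv.refl S).prodCongr (Equiv.prodComm Y2 Y1)) _ _ fun _ => rfl
  phi1 := M.phi2
  phi1_nonneg := M.phi2_nonneg
  phi1_sum := M.phi2_sum
  phi2 := M.phi1
  phi2_nonneg := M.phi1_nonneg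
  phi2_sum := M.phi1_sum
  T := M.T
  T_pos := M.T_pos

end DecPOMDP

section Swap

omit [Nonempty S] [Nonempty Y1] [Nonempty Y2] [Nonempty A1] [Nonempty A2] [Nonempty Z1]
  [Nonempty Z2]

variable (M : DecPOMDP S Y1 Y2 A1 A2 Z1 Z2) (π1 : ℕ → Y1 → Z1 → A1 × Z1 → ℝ)
  (π2 : ℕ → Y2 → Z2 → A2 × Z2 → ℝ) (lam : ℝ) (t : ℕ)

theorem zetaM_swap (u : ℕ) (s : S) (y : Y2 × Y1) (zm : Z2 × Z1) :
    zetaM M.swap π2 π1 u s y zm = zetaM M π1 π2 u s y.swap zm.swap := by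
  induction u generalizing s y zm with
  | zero => simp only [zetaM, DecPOMDP.swap, Prod.fst_swap, Prod.snd_swap]; ring
  | succ n ih =>
    simp only [zetaM, ih]
    refine Finset.sum_congr rfl fun s' _ => ?_
    refine Fintype.sum_equiv (Equiv.prodComm _ _) _ _ fun y' => ?_
    refine Fintype.sum_equiv (Equiv.prodComm _ _) _ _ fun a' => ?_
    refine Fintype.sum_equiv (Equiv.prodComm _ _) _ _ fun zm' => ?_
    simp only [DecPOMDP.swap, Equiv.prodComm_apply, Prod.fst_swap, Prod.snd_swap]
    ring

theorem Qaux_swap (m : ℕ) (s : S) (y : Y2 × Y1) (zm : Z2 × Z1) (a : A2 × A1) (z : Z2 × Z1) :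
    Qaux M.swap π2 π1 lam m s y zm a z = Qaux M π1 π2 lam m s y.swap zm.swap a.swap z.swap := by
  induction m generalizing s y zm a z with
  | zero => rfl
  | succ n ih =>
    simp only [Qaux, ih]
    refine congrArg (M.r s a.swap + 1 / lam * Real.log ·) (Finset.sum_congr rfl fun s' _ => ?_)
    refine Fintype.sum_equiv (Equiv.prodComm _ _) _ _ fun y' => ?_
    refine Fintype.sum_equiv (Equiv.prodComm _ _) _ _ fun a' => ?_
    refine Fintype.sum_equiv (Equiv.prodComm _ _) _ _ fun z' => ?_
    simp only [DecPOMDP.swap, Equiv.prodComm_apply, Prod.fst_swap, Prod.snd_swap]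
    ring

theorem Qfun_swap (s : S) (y : Y2 × Y1) (zm : Z2 × Z1) (a : A2 × A1) (z : Z2 × Z1) :
    Qfun M.swap π2 π1 lam t s y zm a z = Qfun M π1 π2 lam t s y.swap zm.swap a.swap z.swap :=
  Qaux_swap M π1 π2 lam _ s y zm a z

theorem Jrisk_swap : Jrisk M.swap π2 π1 lam t = Jrisk M π1 π2 lam t := by
  simp only [Jrisk, zetaM_swap, Qfun_swap]
  refine congrArg (1 / lam * Real.log ·) (Finset.sum_congr rfl fun s _ => ?_)
  refine Fintype.sum_equiv (Equiv.prodComm _ _) _ _ fun y => ?_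
  refine Fintype.sum_equiv (Equiv.prodComm _ _) _ _ fun zm => ?_
  refine Fintype.sum_equiv (Equiv.prodComm _ _) _ _ fun a => ?_
  refine Fintype.sum_equiv (Equiv.prodComm _ _) _ _ fun z => ?_
  simp only [Equiv.prodComm_apply, Prod.fst_swap, Prod.snd_swap]
  ring

theorem marg1_swap : marg1 M.swap π2 π1 t = marg2 M π1 π2 t := by
  funext y z
  simp only [marg1, marg2, zetaM_swap, Prod.swap_prod_mk]

theorem Qbar1_swap : Qbar1 M.swap π2 π1 lam t = Qbar2 M π1 π2 lam t := by
  funext y z a x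
  simp only [Qbar1, Qbar2, zetaM_swap, Qfun_swap, marg1_swap, Prod.swap_prod_mk]

theorem isGreedy1_swap_iff (g : Y2 → Z2 → A2 × Z2) :
    IsGreedy1 M.swap π2 π1 lam t g ↔ IsGreedy2 M π1 π2 lam t g := by
  rw [IsGreedy1, IsGreedy2, marg1_swap, Qbar1_swap]

end Swap

theorem conservative_update_improvement_general
    (M : DecPOMDP S Y1 Y2 A1 A2 Z1 Z2)
    (π1 : ℕ → Y1 → Z1 → A1 × Z1 → ℝ) (π2 : ℕ → Y2 → Z2 → A2 × Z2 → ℝ)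
    (hπ1 : IsPolicy π1) (hπ2 : IsPolicy π2)
    (lam : ℝ) (hlam : 0 < lam) (t : ℕ)
    (α : ℝ) (hα : α ∈ Set.Icc (0:ℝ) 1) :
    (∀ g : Y1 → Z1 → A1 × Z1, IsGreedy1 M π1 π2 lam t g →
      Jrisk M π1 π2 lam t ≤
        Jrisk M (Function.update π1 t (consRule α (π1 t) g)) π2 lam t) ∧
    (∀ g : Y2 → Z2 → A2 × Z2, IsGreedy2 M π1 π2 lam t g →
      Jrisk M π1 π2 lam t ≤
        Jrisk M π1 (Function.update π2 t (consRule α (π2 t) g)) lam t) := by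
  refine ⟨fun g hg => Jrisk_le_Jrisk_update_consRule_left M lam t hπ1 hπ2 hlam hg hα,
    fun g hg => ?_⟩
  have h := Jrisk_le_Jrisk_update_consRule_left M.swap lam t hπ2 hπ1 hlam
    ((isGreedy1_swap_iff M π1 π2 lam t g).2 hg) hα
  rwa [Jrisk_swap, Jrisk_swap] at h

/-- **Corollary 1 (Conservative update improvement).**
For λ > 0, a joint policy (π1, π2), a time t < T, α ∈ [0,1], and either agent
i ∈ {1,2}: if π̄ⁱ_t is any greedy update for agent i at time t and π' is obtained
from π by replacing the stage-t rule of agent i by the conservative rule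
(1−α)·πⁱ_t + α·𝟙[· = π̄ⁱ_t], then J^λ_{t:T}(π') ≥ J^λ_{t:T}(π). -/
theorem conservative_update_improvement
    (M : DecPOMDP S Y1 Y2 A1 A2 Z1 Z2)
    (π1 : ℕ → Y1 → Z1 → A1 × Z1 → ℝ) (π2 : ℕ → Y2 → Z2 → A2 × Z2 → ℝ)
    (hπ1 : IsPolicy π1) (hπ2 : IsPolicy π2)
    (lam : ℝ) (hlam : 0 < lam) (t : ℕ) (ht : t < M.T)
    (α : ℝ) (hα : α ∈ Set.Icc (0:ℝ) 1) :
    (∀ g : Y1 → Z1 → A1 × Z1, IsGreedy1 M π1 π2 lam t g →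
      Jrisk M π1 π2 lam t ≤
        Jrisk M (Function.update π1 t (consRule α (π1 t) g)) π2 lam t) ∧
    (∀ g : Y2 → Z2 → A2 × Z2, IsGreedy2 M π1 π2 lam t g →
      Jrisk M π1 π2 lam t ≤
        Jrisk M π1 (Function.update π2 t (consRule α (π2 t) g)) lam t) :=
  conservative_update_improvement_general M π1 π2 hπ1 hπ2 lam hlam t α hα
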